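/- (Floquet, repeated root case) For Hill's equation with continuous real π-periodic Q, if ρ₁ = ρ₂ (= ±1), then Hill's equation has a nontrivial solution p with p(x+π) = ρ₁·p(x) for all x (i.e. a periodic solution of period π when ρ₁ = 1 and a solution of period 2π when ρ₁ = −1). -/

import Mathlib

/-!
Since `Q` is `π`-periodic, `x ↦ y (x + π)` solves Hill's equation whenever `y` does, and by
uniqueness for the initial value problem it equals `y π • y₁ + y' π • y₂`. So translation by `π`
acts on the solution space, in the basis `y₁, y₂`, by the monodromy matrix with columns
`(y₁ π, y₁' π)` and `(y₂ π, y₂' π)`. Its determinant is the Wronskian, which is constant and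
equal to `1`, and its trace is `y₁ π + y₂' π`, so every root `ρ` of the characteristic equation
is an eigenvalue and an eigenvector gives a solution with `p (x + π) = ρ p x`. For a repeated
root, `ρ` is half the trace.
-/

open Real Set

structure IsHillSolution (q y : ℝ → ℝ) : Prop where
  differentiable : Differentiable ℝ y
  differentiable_deriv : Differentiable ℝ (deriv y)
  deriv_deriv_add_mul : ∀ x, deriv (deriv y) x + q x * y x = 0

noncomputable def wronskian (y₁ y₂ : ℝ → ℝ) (x : ℝ) : ℝ :=
  y₁ x * deriv y₂ x - y₂ x * deriv y₁ x

namespace IsHillSolution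

variable {q y z : ℝ → ℝ}

theorem add (hy : IsHillSolution q y) (hz : IsHillSolution q z) : IsHillSolution q (y + z) := by
  have hd : deriv (y + z) = deriv y + deriv z :=
    funext fun x => deriv_add (hy.differentiable x) (hz.differentiable x)
  refine ⟨hy.differentiable.add hz.differentiable,
    hd ▸ hy.differentiable_deriv.add hz.differentiable_deriv, fun x => ?_⟩
  rw [hd, deriv_add (hy.differentiable_deriv x) (hz.differentiable_deriv x)]
  simp only [Pi.add_apply]
  linear_combination hy.deriv_deriv_add_mul x + hz.deriv_deriv_add_mul x

theorem const_smul (hy : IsHillSolution q y) (c : ℝ) : IsHillSolution q (c • y) := by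
  have hd : deriv (c • y) = c • deriv y :=
    funext fun x => deriv_const_smul c (hy.differentiable x)
  refine ⟨hy.differentiable.const_smul c, hd ▸ hy.differentiable_deriv.const_smul c,
    fun x => ?_⟩
  rw [hd, deriv_const_smul c (hy.differentiable_deriv x)]
  simp only [Pi.smul_apply, smul_eq_mul]
  linear_combination c * hy.deriv_deriv_add_mul x

theorem sub (hy : IsHillSolution q y) (hz : IsHillSolution q z) : IsHillSolution q (y - z) := by
  simpa [sub_eq_add_neg] using hy.add (hz.const_smul (-1))

theorem comp_add_const (hy : IsHillSolution q y) {T : ℝ} (hq : ∀ x, q (x + T) = q x) :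
    IsHillSolution q (fun x => y (x + T)) := by
  have hd : deriv (fun x => y (x + T)) = fun x => deriv y (x + T) :=
    funext fun x => deriv_comp_add_const y T x
  refine ⟨hy.differentiable.comp (differentiable_id.add_const T),
    hd ▸ hy.differentiable_deriv.comp (differentiable_id.add_const T), fun x => ?_⟩
  rw [hd, deriv_comp_add_const, ← hq x]
  exact hy.deriv_deriv_add_mul (x + T)

theorem eq_zero_of_eq_zero_of_deriv_eq_zero (hq : Continuous q) (hy : IsHillSolution q y)
    {t₀ : ℝ} (h₀ : y t₀ = 0) (h₀' : deriv y t₀ = 0) : y = 0 := by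
  funext x
  -- `q` is only locally bounded, so uniqueness is applied on an interval around `t₀` and `x`.
  set r := |x - t₀| + 1
  obtain ⟨C, hC⟩ := (isCompact_Icc (a := t₀ - r) (b := t₀ + r)).exists_bound_of_continuousOn
    hq.continuousOn
  set v : ℝ → ℝ × ℝ → ℝ × ℝ := fun t u => (u.2, -q t • u.1)
  have hv : ∀ t ∈ Ioo (t₀ - r) (t₀ + r), LipschitzOnWith (max 1 C.toNNReal) (v t) univ := by
    intro t ht
    refine ((LipschitzWith.prod_snd.prodMk
      ((lipschitzWith_smul (-q t)).comp LipschitzWith.prod_fst)).weaken ?_).lipschitzOnWith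
    have hqt : ‖-q t‖₊ ≤ C.toNNReal := by
      rw [nnnorm_neg, ← NNReal.coe_le_coe, coe_nnnorm, Real.coe_toNNReal']
      exact (hC t (Ioo_subset_Icc_self ht)).trans (le_max_left _ _)
    exact max_le_max le_rfl ((mul_one _).le.trans hqt)
  have hphase : ∀ t, HasDerivAt (fun t => (y t, deriv y t)) (v t (y t, deriv y t)) t := by
    intro t
    convert (hy.differentiable t).hasDerivAt.prodMk (hy.differentiable_deriv t).hasDerivAt using 2
    simp only [smul_eq_mul]
    linear_combination -hy.deriv_deriv_add_mul t
  have hzero : ∀ t, HasDerivAt (fun _ => 0) (v t 0) t := fun t =>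
    (hasDerivAt_const t (0 : ℝ × ℝ)).congr_deriv (by ext <;> simp [v])
  have hr : 0 < r := by positivity
  have ht₀ : t₀ ∈ Ioo (t₀ - r) (t₀ + r) := ⟨by linarith, by linarith⟩
  have hx : x ∈ Ioo (t₀ - r) (t₀ + r) := by
    constructor <;> linarith [neg_abs_le (x - t₀), le_abs_self (x - t₀)]
  have := ODE_solution_unique_of_mem_Ioo hv ht₀
    (fun t _ => ⟨hphase t, mem_univ _⟩) (fun t _ => ⟨hzero t, mem_univ _⟩) (by simp [h₀, h₀']) hx
  exact congrArg Prod.fst this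

theorem wronskian_eq (hy : IsHillSolution q y) (hz : IsHillSolution q z) (x x' : ℝ) :
    wronskian y z x = wronskian y z x' := by
  have hW : ∀ t, HasDerivAt (wronskian y z) 0 t := by
    intro t
    refine (((hy.differentiable t).hasDerivAt.mul (hz.differentiable_deriv t).hasDerivAt).sub
      ((hz.differentiable t).hasDerivAt.mul (hy.differentiable_deriv t).hasDerivAt)).congr_deriv ?_
    linear_combination y t * hz.deriv_deriv_add_mul t - z t * hy.deriv_deriv_add_mul t
  exact is_const_of_deriv_eq_zero (fun t => (hW t).differentiableAt) (fun t => (hW t).deriv) x x'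

end IsHillSolution

structure IsNormalizedBasis (q y₁ y₂ : ℝ → ℝ) : Prop where
  fst : IsHillSolution q y₁
  snd : IsHillSolution q y₂
  fst_zero : y₁ 0 = 1
  deriv_fst_zero : deriv y₁ 0 = 0
  snd_zero : y₂ 0 = 0
  deriv_snd_zero : deriv y₂ 0 = 1

namespace IsNormalizedBasis

variable {q y₁ y₂ u : ℝ → ℝ}

theorem deriv_smul_add_smul_zero (hb : IsNormalizedBasis q y₁ y₂) (a b : ℝ) :
    deriv (a • y₁ + b • y₂) 0 = b := by
  rw [deriv_add ((hb.fst.differentiable 0).const_smul a) ((hb.snd.differentiable 0).const_smul b),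
    deriv_const_smul a (hb.fst.differentiable 0), deriv_const_smul b (hb.snd.differentiable 0)]
  simp [hb.deriv_fst_zero, hb.deriv_snd_zero]

theorem eq_smul_add_smul (hb : IsNormalizedBasis q y₁ y₂) (hq : Continuous q)
    (hu : IsHillSolution q u) : u = u 0 • y₁ + deriv u 0 • y₂ := by
  have hcomb := (hb.fst.const_smul (u 0)).add (hb.snd.const_smul (deriv u 0))
  refine sub_eq_zero.mp ((hu.sub hcomb).eq_zero_of_eq_zero_of_deriv_eq_zero hq (t₀ := 0) ?_ ?_)
  · simp [hb.fst_zero, hb.snd_zero]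
  · rw [deriv_sub (hu.differentiable 0) (hcomb.differentiable 0), hb.deriv_smul_add_smul_zero,
      sub_self]

theorem wronskian_eq_one (hb : IsNormalizedBasis q y₁ y₂) (x : ℝ) :
    wronskian y₁ y₂ x = 1 := by
  rw [hb.fst.wronskian_eq hb.snd x 0, wronskian, hb.fst_zero, hb.deriv_fst_zero,
    hb.snd_zero, hb.deriv_snd_zero]
  ring

theorem comp_add_const_eq (hb : IsNormalizedBasis q y₁ y₂) (hq : Continuous q) {T : ℝ}
    (hT : ∀ x, q (x + T) = q x) (hu : IsHillSolution q u) (x : ℝ) :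
    u (x + T) = u T * y₁ x + deriv u T * y₂ x := by
  have h := congrFun (hb.eq_smul_add_smul hq (hu.comp_add_const hT)) x
  simpa [deriv_comp_add_const] using h

theorem exists_floquet_solution (hb : IsNormalizedBasis q y₁ y₂) (hq : Continuous q) {T : ℝ}
    (hT : ∀ x, q (x + T) = q x) {ρ : ℝ} (hρ : ρ ^ 2 - (y₁ T + deriv y₂ T) * ρ + 1 = 0) :
    ∃ p, (∃ x, p x ≠ 0) ∧ IsHillSolution q p ∧ ∀ x, p (x + T) = ρ * p x := by
  -- `N = M - ρ` for the monodromy matrix `M`; a kernel vector gives the coefficients of `p`.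
  set N : Matrix (Fin 2) (Fin 2) ℝ := !![y₁ T - ρ, y₂ T; deriv y₁ T, deriv y₂ T - ρ]
  have hdet : N.det = 0 := by
    rw [Matrix.det_fin_two_of]
    have hW : y₁ T * deriv y₂ T - y₂ T * deriv y₁ T = 1 := hb.wronskian_eq_one T
    linear_combination hρ + hW
  obtain ⟨v, hv, hNv⟩ := Matrix.exists_mulVec_eq_zero_iff.mpr hdet
  have h₀ : (y₁ T - ρ) * v 0 + y₂ T * v 1 = 0 := by
    simpa [N, Matrix.vecHead, Matrix.vecTail] using congrFun hNv 0
  have h₁ : deriv y₁ T * v 0 + (deriv y₂ T - ρ) * v 1 = 0 := by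
    simpa [N, Matrix.vecHead, Matrix.vecTail] using congrFun hNv 1
  refine ⟨v 0 • y₁ + v 1 • y₂, ?_, (hb.fst.const_smul _).add (hb.snd.const_smul _), fun x => ?_⟩
  · by_contra! hp
    apply hv
    ext i
    fin_cases i
    · simpa [hb.fst_zero, hb.snd_zero] using hp 0
    · simpa [funext hp] using (hb.deriv_smul_add_smul_zero (v 0) (v 1)).symm
  · simp only [Pi.add_apply, Pi.smul_apply, smul_eq_mul]
    rw [hb.comp_add_const_eq hq hT hb.fst, hb.comp_add_const_eq hq hT hb.snd]
    linear_combination y₁ x * h₀ + y₂ x * h₁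

end IsNormalizedBasis

/-- Floquet's theorem, repeated-root case: if the characteristic equation has a
repeated root `ρ₁ = ±1`, Hill's equation has a nontrivial solution `p` with
`p(x+π) = ρ₁ p(x)`. -/
theorem floquet_repeated (Q : ℝ → ℝ) (hQcont : Continuous Q)
    (hQper : ∀ x, Q (x + π) = Q x) (lam : ℝ) (y₁ y₂ : ℝ → ℝ)
    (hy₁d : Differentiable ℝ y₁) (hy₁d' : Differentiable ℝ (deriv y₁))
    (hy₂d : Differentiable ℝ y₂) (hy₂d' : Differentiable ℝ (deriv y₂))
    (hy₁ : ∀ x, deriv (deriv y₁) x + (lam + Q x) * y₁ x = 0)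
    (hy₂ : ∀ x, deriv (deriv y₂) x + (lam + Q x) * y₂ x = 0)
    (h10 : y₁ 0 = 1) (h10' : deriv y₁ 0 = 0)
    (h20 : y₂ 0 = 0) (h20' : deriv y₂ 0 = 1)
    (hdisc : (y₁ π + deriv y₂ π) ^ 2 = 4) :
    ∃ p : ℝ → ℝ, (∃ x, p x ≠ 0) ∧
      Differentiable ℝ p ∧ Differentiable ℝ (deriv p) ∧
      (∀ x, deriv (deriv p) x + (lam + Q x) * p x = 0) ∧
      (∀ x, p (x + π) = ((y₁ π + deriv y₂ π) / 2) * p x) := by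
  have hb : IsNormalizedBasis (fun x => lam + Q x) y₁ y₂ :=
    ⟨⟨hy₁d, hy₁d', hy₁⟩, ⟨hy₂d, hy₂d', hy₂⟩, h10, h10', h20, h20'⟩
  obtain ⟨p, hp₀, hp, hpπ⟩ := hb.exists_floquet_solution (continuous_const.add hQcont)
    (fun x => by rw [hQper]) (ρ := (y₁ π + deriv y₂ π) / 2) (by linear_combination -hdisc / 4)
  exact ⟨p, hp₀, hp.differentiable, hp.differentiable_deriv, hp.deriv_deriv_add_mul, hpπ⟩
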